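/- For every integer n ≥ 1 there exists an integer sequence X of length n with nb_peak(X) = ⌊(n−1)/2⌋; hence the maximum number of peaks over all integer sequences of length n is exactly ⌊(n−1)/2⌋. -/

import Mathlib

/-- The signature of an integer sequence: the word over `{<,=,>}` (encoded as
`Ordering.lt`, `Ordering.eq`, `Ordering.gt`) comparing consecutive elements. -/
def signature (X : List ℤ) : List Ordering :=
  List.zipWith compare X X.tail

/-- The number of peaks of a word `w` over `{<,=,>}`: the number of positions `j`
with `w_j = '>'` such that there is `i < j` with `w_i = '<'` and `w_k = '='`
for all `i < k < j`. -/
noncomputable def nbPeak (w : List Ordering) : ℕ :=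
  {j : ℕ | w[j]? = some Ordering.gt ∧
    ∃ i < j, w[i]? = some Ordering.lt ∧
      ∀ k, i < k → k < j → w[k]? = some Ordering.eq}.ncard


/-! A peak at position `j` of the signature needs a `<` at some position `i < j` with
only `=` in between, so position `0` is never a peak and two peaks are at least two positions
apart. A signature of length `n - 1` therefore has at most `⌊(n - 1) / 2⌋` peaks, and the
alternating sequence `0, 1, 0, 1, …`, whose signature is `<><>…`, has a peak at every odd
position. -/

lemma Set.ncard_le_div_two_of_add_two_le {s : Set ℕ} {m : ℕ} (hs : ∀ j ∈ s, 1 ≤ j ∧ j < m)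
    (hgap : ∀ i ∈ s, ∀ j ∈ s, i < j → i + 2 ≤ j) : s.ncard ≤ m / 2 := by
  have hinj : Set.InjOn (fun j => (j - 1) / 2) s := by
    intro i hi j hj hij
    have := hs i hi; have := hs j hj
    rcases lt_trichotomy i j with h | h | h
    · have := hgap i hi j hj h; simp only at hij; omega
    · exact h
    · have := hgap j hj i hi h; simp only at hij; omega
  calc s.ncard ≤ (Set.Iio (m / 2)).ncard :=
        Set.ncard_le_ncard_of_injOn _
          (fun j hj => by have := hs j hj; simp only [Set.mem_Iio]; omega) hinj
    _ = m / 2 := by simp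

def peakPositions (w : List Ordering) : Set ℕ :=
  {j : ℕ | w[j]? = some Ordering.gt ∧
    ∃ i < j, w[i]? = some Ordering.lt ∧
      ∀ k, i < k → k < j → w[k]? = some Ordering.eq}

lemma nbPeak_eq_ncard_peakPositions (w : List Ordering) :
    nbPeak w = (peakPositions w).ncard := rfl

section peakPositions

variable {w : List Ordering} {i j : ℕ}

lemma lt_length_of_mem_peakPositions (h : j ∈ peakPositions w) : j < w.length := by
  by_contra hc
  simpa [List.getElem?_eq_none (not_lt.mp hc)] using h.1

lemma one_le_of_mem_peakPositions (h : j ∈ peakPositions w) : 1 ≤ j := by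
  obtain ⟨-, i, hi, -⟩ := h; omega

lemma add_two_le_of_mem_peakPositions (hi : i ∈ peakPositions w) (hj : j ∈ peakPositions w)
    (hij : i < j) : i + 2 ≤ j := by
  obtain ⟨hi_gt, -⟩ := hi
  obtain ⟨-, l, hlj, hl_lt, hl_eq⟩ := hj
  rcases lt_trichotomy l i with h | rfl | h
  · simpa [hi_gt] using hl_eq i h hij
  · simp [hi_gt] at hl_lt
  · omega

end peakPositions

lemma nbPeak_le (w : List Ordering) : nbPeak w ≤ w.length / 2 :=
  Set.ncard_le_div_two_of_add_two_le
    (fun _ hj => ⟨one_le_of_mem_peakPositions hj, lt_length_of_mem_peakPositions hj⟩)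
    (fun _ hi _ hj => add_two_le_of_mem_peakPositions hi hj)

lemma length_signature (X : List ℤ) : (signature X).length = X.length - 1 := by
  simp [signature]

lemma getElem?_signature {X : List ℤ} {j : ℕ} (h : j + 1 < X.length) :
    (signature X)[j]? = some (compare X[j] X[j + 1]) := by
  simp [signature, List.getElem?_zipWith, h, Nat.lt_of_succ_lt h]

def alternating (n : ℕ) : List ℤ := (List.range n).map fun i : ℕ => (i : ℤ) % 2

lemma length_alternating (n : ℕ) : (alternating n).length = n := by simp [alternating]

lemma getElem?_signature_alternating {n j : ℕ} (hj : j + 1 < n) :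
    (signature (alternating n))[j]? =
      some (if j % 2 = 0 then Ordering.lt else Ordering.gt) := by
  rw [getElem?_signature (by simpa [length_alternating] using hj)]
  simp only [alternating, List.getElem_map, List.getElem_range]
  rcases Nat.mod_two_eq_zero_or_one j with h | h
  · rw [if_pos h, show (j : ℤ) % 2 = 0 by omega, show ((j + 1 : ℕ) : ℤ) % 2 = 1 by omega]
    rfl
  · rw [if_neg (by omega), show (j : ℤ) % 2 = 1 by omega, show ((j + 1 : ℕ) : ℤ) % 2 = 0 by omega]
    rfl

lemma peakPositions_signature_alternating (n : ℕ) :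
    peakPositions (signature (alternating n)) =
      (fun k => 2 * k + 1) '' Set.Iio ((n - 1) / 2) := by
  ext j
  simp only [Set.mem_image, Set.mem_Iio]
  constructor
  · intro hj
    have hlen := lt_length_of_mem_peakPositions hj
    rw [length_signature, length_alternating] at hlen
    have hgt := hj.1
    rw [getElem?_signature_alternating (by omega)] at hgt
    have hodd : j % 2 = 1 := by by_contra h; simp [show j % 2 = 0 by omega] at hgt
    exact ⟨j / 2, by omega, by omega⟩
  · rintro ⟨k, hk, rfl⟩
    refine ⟨?_, 2 * k, by omega, ?_, fun l h1 h2 => by omega⟩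
    · rw [getElem?_signature_alternating (by omega)]; simp [Nat.add_mod]
    · rw [getElem?_signature_alternating (by omega)]; simp

lemma nbPeak_signature_alternating (n : ℕ) :
    nbPeak (signature (alternating n)) = (n - 1) / 2 := by
  rw [nbPeak_eq_ncard_peakPositions, peakPositions_signature_alternating,
    Set.ncard_image_of_injective _ (fun a b h => by omega)]
  simp

/-- For every `n ≥ 1` there is an integer sequence of length `n` with
`⌊(n−1)/2⌋` peaks, and this is the maximum number of peaks over all
integer sequences of length `n`. -/
theorem isGreatest_nbPeak (n : ℕ) (hn : 1 ≤ n) :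
    IsGreatest {k : ℕ | ∃ X : List ℤ, X ≠ [] ∧ X.length = n ∧ nbPeak (signature X) = k}
      ((n - 1) / 2) := by
  refine ⟨⟨alternating n, ?_, length_alternating n, nbPeak_signature_alternating n⟩, ?_⟩
  · rw [← List.length_pos_iff, length_alternating]; omega
  · rintro k ⟨X, -, rfl, rfl⟩
    simpa [length_signature] using nbPeak_le (signature X)
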